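/- Define a sequence f_b in the field Q(t,q) for b ∈ Z by the initial conditions f_{-1} = f_0 = 1, f_1 = 1 + (q^{-1} + q^{-3}) u + q^2 u^2 where u = t + t^{-1} - q - q^{-1}, and the recursion q^4 t^2 f_{b+3} = (q^2 + q^4 t^2 + q^2 t^4) f_{b+2} - (q^2 + t^2 + q^2 t^4) f_{b+1} + t^2 f_b for all b ∈ Z. Then for every integer b ≥ 1, f_b is a Laurent polynomial in t and q whose highest t-power is t^{2b} and whose lowest t-power is t^{-2b}; in particular its t-degree equals 4b. -/

import Mathlib

open LaurentPolynomial

set_option synthInstance.maxHeartbeats 1000000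
set_option maxHeartbeats 2000000

noncomputable section

instance : IsDomain (LaurentPolynomial (LaurentPolynomial ℚ)) :=
  NoZeroDivisors.to_isDomain _

/-- The field `ℚ(t,q)`, realized as the fraction field of the Laurent polynomial
ring `ℚ[t^±1][q^±1]` (with `t` the outer variable and `q` the inner one). -/
abbrev F : Type := FractionRing (LaurentPolynomial (LaurentPolynomial ℚ))

/-- The variable `t` of `ℚ(t,q)`. -/
def t : F := algebraMap (LaurentPolynomial (LaurentPolynomial ℚ)) F (T 1)

/-- The variable `q` of `ℚ(t,q)`. -/
def q : F := algebraMap (LaurentPolynomial (LaurentPolynomial ℚ)) F (LaurentPolynomial.C (T 1))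

/-!
The recursion, divided by `q⁴t²`, reads
`f (b+3) = q⁻⁴ ((q²(t² + t⁻²) + q⁴) f (b+2) - (q²(t² + t⁻²) + 1) f (b+1) + f b)`.
Since `q⁴t²` is a unit of `ℚ[q^±1][t^±1]`, this defines Laurent polynomials representing all
`f b`, and it is invariant under `t ↦ t⁻¹`, so each `f b` is palindromic in `t`. Multiplying by
`t² + t⁻²` raises the top `t`-degree by exactly two, so the top term of `f (b+3)` is `q⁻²t²`
times that of `f (b+2)`: starting from `q²t²` in `f 1`, the top term of `f b` is `q^(4-2b) t^(2b)`.
-/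

namespace LaurentPolynomial

variable {R : Type*} [Semiring R]

lemma coeff_C_mul (a : R) (p : R[T;T⁻¹]) (k : ℤ) : (C a * p).coeff k = a * p.coeff k := by
  rw [← single_eq_C, AddMonoidAlgebra.coeff_single_mul_apply, neg_zero, zero_add]

lemma coeff_T_mul (m : ℤ) (p : R[T;T⁻¹]) (k : ℤ) : (T m * p).coeff k = p.coeff (k - m) := by
  rw [T, AddMonoidAlgebra.coeff_single_mul_apply, one_mul, neg_add_eq_sub]

lemma coeff_C_mul_T (a : R) (m k : ℤ) :
    (C a * T m : R[T;T⁻¹]).coeff k = if m = k then a else 0 := by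
  rw [← single_eq_C_mul_T]
  exact Finsupp.single_apply

lemma T_ne_zero [Nontrivial R] (n : ℤ) : (T n : R[T;T⁻¹]) ≠ 0 :=
  (isUnit_T n).ne_zero

variable {D : Type*} [DivisionRing D] (φ : R[T;T⁻¹] →+* D)

lemma map_T_ne_zero (n : ℤ) : φ (T n) ≠ 0 :=
  ((isUnit_T n).map φ).ne_zero

lemma map_T_eq_zpow (n : ℤ) : φ (T n) = φ (T 1) ^ n := by
  have hinv : φ (T (-1)) = (φ (T 1))⁻¹ :=
    eq_inv_of_mul_eq_one_right (by rw [← map_mul, ← T_add, add_neg_cancel, T_zero, map_one])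
  induction n using Int.induction_on with
  | zero => rw [T_zero, map_one, zpow_zero]
  | succ i ih => rw [T_add, map_mul, ih, zpow_add_one₀ (map_T_ne_zero φ 1)]
  | pred i ih =>
    rw [sub_eq_add_neg, T_add, map_mul, ih, hinv, ← zpow_neg_one,
      ← zpow_add₀ (map_T_ne_zero φ 1)]

end LaurentPolynomial

local notation "Λ" => LaurentPolynomial (LaurentPolynomial ℚ)

namespace V1Torus

/-- `torusV1 n` represents `f (n - 1)`. In `Λ = ℚ[q^±1][t^±1]` the outer `T k` is `t^k` and
`C (T k)` is `q^k`; the value at `2` is `f 1` expanded in powers of `t`. -/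
def torusV1 : ℕ → Λ
  | 0 => 1
  | 1 => 1
  | 2 => C (T 2) * T (-2) + C (T (-3) + T (-1) - 2 * T 1 - 2 * T 3) * T (-1)
      + C (-T (-4) - 2 * T (-2) + 1 + 4 * T 2 + T 4)
      + C (T (-3) + T (-1) - 2 * T 1 - 2 * T 3) * T 1 + C (T 2) * T 2
  | n + 3 => C (T (-4)) * ((C (T 2) * (T 2 + T (-2)) + C (T 4)) * torusV1 (n + 2)
      - (C (T 2) * (T 2 + T (-2)) + 1) * torusV1 (n + 1) + torusV1 n)

lemma coeff_torusV1_add_three (n : ℕ) (k : ℤ) :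
    (torusV1 (n + 3)).coeff k = T (-4) *
      (T 2 * ((torusV1 (n + 2)).coeff (k - 2) + (torusV1 (n + 2)).coeff (k + 2))
        + T 4 * (torusV1 (n + 2)).coeff k
        - (T 2 * ((torusV1 (n + 1)).coeff (k - 2) + (torusV1 (n + 1)).coeff (k + 2))
          + (torusV1 (n + 1)).coeff k)
        + (torusV1 n).coeff k) := by
  simp only [torusV1, mul_assoc, add_mul, one_mul, AddMonoidAlgebra.coeff_add,
    AddMonoidAlgebra.coeff_sub, Finsupp.add_apply, Finsupp.sub_apply, coeff_C_mul, coeff_T_mul]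
  ring_nf

-- `n - 1` is truncated subtraction: the bound for `torusV1 0 = f (-1) = 1` is `0`.
lemma coeff_torusV1_eq_zero_of_lt (n : ℕ) (k : ℤ) (hk : 2 * ((n - 1 : ℕ) : ℤ) < k) :
    (torusV1 n).coeff k = 0 := by
  induction n using torusV1.induct generalizing k with
  | case1 | case2 => rw [torusV1, ← T_zero, T_apply, if_neg (by omega)]
  | case3 =>
    simp only [torusV1, AddMonoidAlgebra.coeff_add, Finsupp.add_apply, coeff_C_mul_T, C_apply]
    split_ifs <;> first | omega | simp
  | case4 n ih2 ih1 ih0 =>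
    rw [coeff_torusV1_add_three, ih2 (k - 2) (by omega), ih2 k (by omega), ih2 (k + 2) (by omega),
      ih1 (k - 2) (by omega), ih1 k (by omega), ih1 (k + 2) (by omega), ih0 k (by omega)]
    ring

lemma coeff_torusV1_top (n : ℕ) : (torusV1 (n + 2)).coeff (2 * n + 2) = T (2 - 2 * n) := by
  induction n with
  | zero =>
    simp only [torusV1, AddMonoidAlgebra.coeff_add, Finsupp.add_apply, coeff_C_mul_T, C_apply]
    norm_num
  | succ n ih =>
    have vanish := coeff_torusV1_eq_zero_of_lt
    rw [show n + 1 + 2 = n + 3 from rfl, coeff_torusV1_add_three,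
      show 2 * ((n + 1 : ℕ) : ℤ) + 2 - 2 = 2 * n + 2 by push_cast; ring, ih,
      vanish (n + 2) _ (by omega), vanish (n + 2) _ (by omega), vanish (n + 1) _ (by omega),
      vanish (n + 1) _ (by omega), vanish (n + 1) _ (by omega), vanish n _ (by omega)]
    simp only [mul_zero, add_zero, sub_zero, ← T_add]
    congr 1
    push_cast
    ring

lemma invert_torusV1 (n : ℕ) : invert (torusV1 n) = torusV1 n := by
  induction n using torusV1.induct with
  | case1 | case2 => exact map_one _
  | case3 =>
    simp only [torusV1, map_add, map_mul, invert_C, invert_T, neg_neg]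
    ring
  | case4 n ih2 ih1 ih0 =>
    simp only [torusV1, map_add, map_sub, map_mul, map_one, invert_C, invert_T, neg_neg,
      ih2, ih1, ih0]
    ring

lemma coeff_torusV1_neg (n : ℕ) (k : ℤ) : (torusV1 n).coeff (-k) = (torusV1 n).coeff k := by
  rw [← invert_apply, invert_torusV1]

lemma coeff_torusV1_eq_zero_of_lt_abs (n : ℕ) (k : ℤ) (hk : 2 * ((n - 1 : ℕ) : ℤ) < |k|) :
    (torusV1 n).coeff k = 0 := by
  rcases abs_choice k with hk' | hk' <;> rw [hk'] at hk
  · exact coeff_torusV1_eq_zero_of_lt n k hk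
  · rw [← coeff_torusV1_neg]
    exact coeff_torusV1_eq_zero_of_lt n (-k) hk

lemma algebraMap_T (n : ℤ) : algebraMap Λ F (T n) = t ^ n :=
  map_T_eq_zpow (algebraMap Λ F) n

lemma algebraMap_C_T (n : ℤ) : algebraMap Λ F (C (T n)) = q ^ n :=
  map_T_eq_zpow ((algebraMap Λ F).comp C) n

lemma t_ne_zero : t ≠ 0 := map_T_ne_zero (algebraMap Λ F) 1

lemma q_ne_zero : q ≠ 0 := map_T_ne_zero ((algebraMap Λ F).comp C) 1

lemma algebraMap_torusV1 (f : ℤ → F) (hm1 : f (-1) = 1) (h0 : f 0 = 1)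
    (h1 : f 1 = 1 + (q ^ (-1 : ℤ) + q ^ (-3 : ℤ)) * (t + t⁻¹ - q - q⁻¹)
        + q ^ 2 * (t + t⁻¹ - q - q⁻¹) ^ 2)
    (hrec : ∀ b : ℤ, q ^ 4 * t ^ 2 * f (b + 3) =
        (q ^ 2 + q ^ 4 * t ^ 2 + q ^ 2 * t ^ 4) * f (b + 2)
          - (q ^ 2 + t ^ 2 + q ^ 2 * t ^ 4) * f (b + 1) + t ^ 2 * f b)
    (n : ℕ) : algebraMap Λ F (torusV1 n) = f (n - 1) := by
  induction n using torusV1.induct with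
  | case1 => simp [torusV1, hm1]
  | case2 => simp [torusV1, h0]
  | case3 =>
    rw [show ((2 : ℕ) : ℤ) - 1 = 1 by norm_num, h1]
    simp only [torusV1, map_add, map_sub, map_neg, map_mul, map_one, map_ofNat, algebraMap_T,
      algebraMap_C_T, zpow_neg, zpow_ofNat]
    field_simp [t_ne_zero, q_ne_zero]
    ring
  | case4 n ih2 ih1 ih0 =>
    show algebraMap Λ F (torusV1 (n + 3)) = f ((n + 3 : ℕ) - 1)
    rw [show ((n + 3 : ℕ) : ℤ) - 1 = n - 1 + 3 by push_cast; ring]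
    rw [show ((n + 2 : ℕ) : ℤ) - 1 = n - 1 + 2 by push_cast; ring] at ih2
    rw [show ((n + 1 : ℕ) : ℤ) - 1 = n - 1 + 1 by push_cast; ring] at ih1
    refine mul_left_cancel₀ (mul_ne_zero (pow_ne_zero 4 q_ne_zero) (pow_ne_zero 2 t_ne_zero)) ?_
    simp only [torusV1, map_add, map_sub, map_mul, map_one, algebraMap_T, algebraMap_C_T, ih2, ih1,
      ih0, hrec, zpow_neg, zpow_ofNat]
    field_simp [t_ne_zero, q_ne_zero]
    ring

end V1Torus

/-- Let `f : ℤ → ℚ(t,q)` satisfy `f (-1) = f 0 = 1`,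
`f 1 = 1 + (q⁻¹ + q⁻³) u + q² u²` where `u = t + t⁻¹ - q - q⁻¹`, and the recursion
`q⁴ t² f (b+3) = (q² + q⁴ t² + q² t⁴) f (b+2) - (q² + t² + q² t⁴) f (b+1) + t² f b`
for all `b : ℤ`.  Then for every `b ≥ 1`, `f b` is a Laurent polynomial in `t` and `q`
whose highest `t`-power is `t^(2b)` and whose lowest `t`-power is `t^(-2b)`; in
particular its `t`-degree is `4b`. -/
theorem V1_torus_t_degree (f : ℤ → F)
    (hm1 : f (-1) = 1) (h0 : f 0 = 1)
    (h1 : f 1 = 1 + (q ^ (-1 : ℤ) + q ^ (-3 : ℤ)) * (t + t⁻¹ - q - q⁻¹)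
        + q ^ 2 * (t + t⁻¹ - q - q⁻¹) ^ 2)
    (hrec : ∀ b : ℤ, q ^ 4 * t ^ 2 * f (b + 3) =
        (q ^ 2 + q ^ 4 * t ^ 2 + q ^ 2 * t ^ 4) * f (b + 2)
          - (q ^ 2 + t ^ 2 + q ^ 2 * t ^ 4) * f (b + 1) + t ^ 2 * f b) :
    ∀ b : ℤ, 1 ≤ b →
      ∃ g : LaurentPolynomial (LaurentPolynomial ℚ),
        algebraMap (LaurentPolynomial (LaurentPolynomial ℚ)) F g = f b ∧
        g.coeff (2 * b) ≠ 0 ∧ g.coeff (-(2 * b)) ≠ 0 ∧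
        ∀ n : ℤ, (2 * b < n ∨ n < -(2 * b)) → g.coeff n = 0 := by
  intro b hb
  obtain ⟨n, rfl⟩ : ∃ n : ℕ, b = n + 1 := ⟨(b - 1).toNat, by omega⟩
  have htop : (V1Torus.torusV1 (n + 2)).coeff (2 * (n + 1 : ℤ)) ≠ 0 := by
    rw [show 2 * ((n : ℤ) + 1) = 2 * n + 2 by ring, V1Torus.coeff_torusV1_top]
    exact T_ne_zero _
  refine ⟨V1Torus.torusV1 (n + 2), ?_, htop, by rwa [V1Torus.coeff_torusV1_neg], ?_⟩
  · rw [V1Torus.algebraMap_torusV1 f hm1 h0 h1 hrec]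
    push_cast
    ring_nf
  · intro k hk
    exact V1Torus.coeff_torusV1_eq_zero_of_lt_abs _ _ (by rw [lt_abs, lt_neg]; omega)
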